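/- Let M be a monoid. Call an M-pigmented word a magnet if no step of ⤳_1, ⤳_2, or ⤳_3 applies to it (it is maximal for each of the three rewriting relations). Then every equivalence class of the relation ≡ on P(M)(n), defined by p ≡ p' iff first_1(p) = first_1(p') and first_1^R(p) = first_1^R(p'), contains exactly one magnet. -/

import Mathlib

/-- An `M`-pigmented word of arity `n`: a list of letters `(i, α)` whose value is
`i ∈ Fin n` (representing the value `i + 1 ∈ {1, …, n}`) and whose pigment is `α ∈ M`. -/
abbrev PW (M : Type*) (n : ℕ) : Type _ := List (Fin n × M)

/-- The value `i` occurs in the word `p`. -/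
def hasVal {M : Type*} {n : ℕ} (p : PW M n) (i : Fin n) : Prop := ∃ l ∈ p, l.1 = i

/-- `⤳₁`: delete a letter whose value occurs both before and after it
(a position which is neither a left `1`-witness nor a right `1`-witness). -/
def Step1 {M : Type*} {n : ℕ} (u v : PW M n) : Prop :=
  ∃ (p p' : PW M n) (i : Fin n) (α : M),
    u = p ++ (i, α) :: p' ∧ v = p ++ p' ∧ hasVal p i ∧ hasVal p' i

/-- `⤳₂`: swap two adjacent letters `i₁^{α₁} i₂^{α₂}` with distinct values, where
`i₁` occurs after, `i₂` occurs before, and `i₂` does not occur after. -/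
def Step2 {M : Type*} {n : ℕ} (u v : PW M n) : Prop :=
  ∃ (p p' : PW M n) (i₁ i₂ : Fin n) (α₁ α₂ : M),
    u = p ++ (i₁, α₁) :: (i₂, α₂) :: p' ∧ v = p ++ (i₂, α₂) :: (i₁, α₁) :: p' ∧
    i₁ ≠ i₂ ∧ hasVal p' i₁ ∧ hasVal p i₂ ∧ ¬ hasVal p' i₂

/-- `⤳₃`: contract two equal adjacent letters to one. -/
def Step3 {M : Type*} {n : ℕ} (u v : PW M n) : Prop :=
  ∃ (p p' : PW M n) (i : Fin n) (α : M),
    u = p ++ (i, α) :: (i, α) :: p' ∧ v = p ++ (i, α) :: p'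

/-- The union `⤳₁ ∪ ⤳₂ ∪ ⤳₃`; the relation `∼` is its reflexive, symmetric and
transitive closure `Relation.EqvGen MagnStep`. -/
def MagnStep {M : Type*} {n : ℕ} (u v : PW M n) : Prop := Step1 u v ∨ Step2 u v ∨ Step3 u v

/-- `firstKAux k pre p` keeps those letters of `p` whose position is a left
`k`-witness, given that the prefix `pre` has already been read. -/
def firstKAux {M : Type*} {n : ℕ} (k : ℕ) : PW M n → PW M n → PW M n
  | _, [] => []
  | pre, l :: t =>
    if pre.countP (fun x => decide (x.1 = l.1)) < k
    then l :: firstKAux k (pre ++ [l]) t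
    else firstKAux k (pre ++ [l]) t

/-- `firstK k p` keeps, for each value, the first `k` occurrences of that value in `p`
(the letters at left `k`-witness positions). -/
def firstK {M : Type*} {n : ℕ} (k : ℕ) (p : PW M n) : PW M n := firstKAux k [] p

/-- `firstKR k p` keeps, for each value, the last `k` occurrences of that value in `p`:
it is the reverse of `firstK k` applied to the reverse of `p`. -/
def firstKR {M : Type*} {n : ℕ} (k : ℕ) (p : PW M n) : PW M n := (firstK k p.reverse).reverse

/-- A magnet: an `M`-pigmented word to which no step of `⤳₁`, `⤳₂` or `⤳₃` applies. -/
def IsMagnet {M : Type*} {n : ℕ} (p : PW M n) : Prop := ∀ v : PW M n, ¬ MagnStep p v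

/-!
Every step `⤳ᵢ` preserves `firstK 1` and the word `lastOcc` of last occurrences (which is
`firstKR 1`), and strictly decreases the sum of the positions of the last occurrences; so
rewriting a word until no step applies yields a magnet in its class.

Two magnets of one class agree letter by letter. The first letter of a magnet is either a first
occurrence, hence the next letter of `firstK 1`, or a repeated value, hence the first letter of
`lastOcc`. And the first last occurrence of an already seen value must open the rest of a magnet:
a letter in front of it would be a middle occurrence (excluded by `⤳₁`) or a first occurrence
(moved behind it by `⤳₂`). Finally `⤳₃` forces both magnets to agree on whether their common
first letter occurs again.
-/

section Magnets

variable {M : Type*} {n : ℕ}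

section HasVal

variable {p q : PW M n} {l : Fin n × M} {i : Fin n}

@[simp] lemma not_hasVal_nil : ¬ hasVal ([] : PW M n) i := by simp [hasVal]

@[simp] lemma hasVal_cons : hasVal (l :: p) i ↔ l.1 = i ∨ hasVal p i := by simp [hasVal]

@[simp] lemma hasVal_append : hasVal (p ++ q) i ↔ hasVal p i ∨ hasVal q i := by
  simp [hasVal, or_and_right, exists_or]

@[simp] lemma hasVal_reverse : hasVal p.reverse i ↔ hasVal p i := by simp [hasVal]

instance (p : PW M n) (i : Fin n) : Decidable (hasVal p i) := by
  unfold hasVal; infer_instance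

end HasVal

lemma firstKAux_append (k : ℕ) (pre xs ys : PW M n) :
    firstKAux k pre (xs ++ ys) = firstKAux k pre xs ++ firstKAux k (pre ++ xs) ys := by
  induction xs generalizing pre with
  | nil => simp [firstKAux]
  | cons l xs ih => simp only [List.cons_append, firstKAux, ih]; split_ifs <;> simp

lemma firstKAux_one_cons (pre : PW M n) (l : Fin n × M) (t : PW M n) :
    firstKAux 1 pre (l :: t) =
      if hasVal pre l.1 then firstKAux 1 (pre ++ [l]) t else l :: firstKAux 1 (pre ++ [l]) t := by
  have : pre.countP (fun x => decide (x.1 = l.1)) < 1 ↔ ¬ hasVal pre l.1 := by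
    simp only [Nat.lt_one_iff, List.countP_eq_zero, hasVal, decide_eq_true_eq, not_exists,
      not_and]
  by_cases h : hasVal pre l.1 <;> simp [firstKAux, h, this]

lemma firstKAux_one_congr {pre pre' : PW M n} (h : ∀ i, hasVal pre i ↔ hasVal pre' i)
    (t : PW M n) : firstKAux 1 pre t = firstKAux 1 pre' t := by
  induction t generalizing pre pre' with
  | nil => rfl
  | cons l t ih =>
    have h' : ∀ i, hasVal (pre ++ [l]) i ↔ hasVal (pre' ++ [l]) i := by simp [h]
    simp only [firstKAux_one_cons, h, ih h']

def lastOcc : PW M n → PW M n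
  | [] => []
  | l :: t => if hasVal t l.1 then lastOcc t else l :: lastOcc t

section LastOcc

variable {p t U V : PW M n} {l : Fin n × M} {i : Fin n}

@[simp] lemma lastOcc_nil : lastOcc ([] : PW M n) = [] := rfl

lemma lastOcc_cons_of_hasVal (h : hasVal t l.1) : lastOcc (l :: t) = lastOcc t := by
  simp [lastOcc, h]

lemma lastOcc_cons_of_not_hasVal (h : ¬ hasVal t l.1) : lastOcc (l :: t) = l :: lastOcc t := by
  simp [lastOcc, h]

@[simp] lemma hasVal_lastOcc : hasVal (lastOcc p) i ↔ hasVal p i := by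
  induction p with
  | nil => rfl
  | cons l t ih =>
    by_cases h : hasVal t l.1
    · rw [lastOcc_cons_of_hasVal h, ih, hasVal_cons]
      exact ⟨Or.inr, by rintro (rfl | h') <;> assumption⟩
    · rw [lastOcc_cons_of_not_hasVal h, hasVal_cons, hasVal_cons, ih]

@[simp] lemma lastOcc_eq_nil : lastOcc p = [] ↔ p = [] := by
  refine ⟨fun h => ?_, by rintro rfl; rfl⟩
  cases p with
  | nil => rfl
  | cons l t =>
    have : hasVal (lastOcc (l :: t)) l.1 := hasVal_lastOcc.2 (by simp)
    simp [h] at this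

lemma lastOcc_append_congr (p : PW M n) (h : lastOcc U = lastOcc V) :
    lastOcc (p ++ U) = lastOcc (p ++ V) := by
  have hval : ∀ i, hasVal U i ↔ hasVal V i := fun i => by
    rw [← hasVal_lastOcc, h, hasVal_lastOcc]
  induction p with
  | nil => exact h
  | cons l p ih => simp only [List.cons_append, lastOcc, hasVal_append, hval, ih]

lemma firstKR_one_eq_lastOcc (p : PW M n) : firstKR 1 p = lastOcc p := by
  induction p with
  | nil => rfl
  | cons l t ih =>
    rw [firstKR, firstK, List.reverse_cons, firstKAux_append, List.reverse_append,
      firstKAux_one_cons, List.nil_append]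
    by_cases h : hasVal t l.1
    · simp [h, firstKAux, lastOcc_cons_of_hasVal h, ← ih, firstKR, firstK]
    · simp [h, firstKAux, lastOcc_cons_of_not_hasVal h, ← ih, firstKR, firstK]

end LastOcc

/-- The sum of the positions of the last occurrences (prepending a letter shifts each of them
by one). -/
def lastOccPosSum : PW M n → ℕ
  | [] => 0
  | _ :: t => lastOccPosSum t + (lastOcc t).length

lemma lastOccPosSum_append_lt {U V : PW M n} (p : PW M n) (h : lastOcc U = lastOcc V)
    (hlt : lastOccPosSum U < lastOccPosSum V) :
    lastOccPosSum (p ++ U) < lastOccPosSum (p ++ V) := by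
  induction p with
  | nil => exact hlt
  | cons l p ih =>
    simp only [List.cons_append, lastOccPosSum, lastOcc_append_congr p h]
    omega

lemma lastOccPosSum_lt_cons {t : PW M n} (ht : t ≠ []) (l : Fin n × M) :
    lastOccPosSum t < lastOccPosSum (l :: t) := by
  have : lastOcc t ≠ [] := by simpa using ht
  simp only [lastOccPosSum]
  have := List.length_pos_iff.2 this
  omega

section Steps

variable {u v : PW M n}

lemma MagnStep.lastOcc_eq (h : MagnStep u v) : lastOcc v = lastOcc u := by
  rcases h with ⟨p, p', i, α, rfl, rfl, -, hi⟩ |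
    ⟨p, p', i₁, i₂, α₁, α₂, rfl, rfl, hne, hi₁, -, hi₂⟩ | ⟨p, p', i, α, rfl, rfl⟩
  · exact lastOcc_append_congr p (lastOcc_cons_of_hasVal hi).symm
  · exact lastOcc_append_congr p (by simp [lastOcc, hne, Ne.symm hne, hi₁, hi₂])
  · exact lastOcc_append_congr p (lastOcc_cons_of_hasVal (by simp)).symm

lemma MagnStep.lastOccPosSum_lt (h : MagnStep u v) : lastOccPosSum v < lastOccPosSum u := by
  rcases h with ⟨p, p', i, α, rfl, rfl, -, hi⟩ |
    ⟨p, p', i₁, i₂, α₁, α₂, rfl, rfl, hne, hi₁, -, hi₂⟩ | ⟨p, p', i, α, rfl, rfl⟩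
  · have hp' : p' ≠ [] := by rintro rfl; simp at hi
    exact lastOccPosSum_append_lt p (lastOcc_cons_of_hasVal hi).symm
      (lastOccPosSum_lt_cons hp' _)
  · refine lastOccPosSum_append_lt p (by simp [lastOcc, hne, Ne.symm hne, hi₁, hi₂]) ?_
    simp [lastOccPosSum, lastOcc, hi₁, hi₂]
  · exact lastOccPosSum_append_lt p (lastOcc_cons_of_hasVal (by simp)).symm
      (lastOccPosSum_lt_cons (by simp) _)

lemma MagnStep.firstK_one_eq (h : MagnStep u v) : firstK 1 v = firstK 1 u := by
  rcases h with ⟨p, p', i, α, rfl, rfl, hi, -⟩ |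
    ⟨p, p', i₁, i₂, α₁, α₂, rfl, rfl, hne, -, hi₂, -⟩ | ⟨p, p', i, α, rfl, rfl⟩ <;>
  simp only [firstK, firstKAux_append, List.nil_append, List.append_cancel_left_eq]
  · rw [firstKAux_one_cons, if_pos hi]
    exact firstKAux_one_congr (by simp [hi]) p'
  · by_cases h₁ : hasVal p i₁ <;>
      simp [firstKAux_one_cons, h₁, hi₂, hne, Ne.symm hne] <;>
      exact firstKAux_one_congr (by simp [or_comm]) p'
  · by_cases h : hasVal p i <;>
      simp [firstKAux_one_cons, h] <;>
      exact firstKAux_one_congr (by simp) p'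

end Steps

section Magnet

variable {out p p' s t t' : PW M n} {c c' l z z' : Fin n × M}

lemma IsMagnet.not_hasVal_right (hw : IsMagnet (p ++ z :: p')) (h : hasVal p z.1) :
    ¬ hasVal p' z.1 :=
  fun h' => hw (p ++ p') (Or.inl ⟨p, p', z.1, z.2, rfl, rfl, h, h'⟩)

lemma IsMagnet.hasVal_right_of_adjacent (hw : IsMagnet (p ++ z :: z' :: p')) (hne : z.1 ≠ z'.1)
    (hz : hasVal p' z.1) (hz' : hasVal p z'.1) : hasVal p' z'.1 := by
  by_contra h
  exact hw _ (Or.inr (Or.inl ⟨p, p', z.1, z'.1, z.2, z'.2, rfl, rfl, hne, hz, hz', h⟩))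

lemma IsMagnet.ne_of_adjacent (hw : IsMagnet (p ++ z :: z' :: p')) : z ≠ z' := by
  rintro rfl
  exact hw _ (Or.inr (Or.inr ⟨p, p', z.1, z.2, rfl, rfl⟩))

lemma IsMagnet.eq_cons_of_lastOcc_eq_cons {q : PW M n} (hw : IsMagnet (out ++ q))
    (hq : lastOcc q = l :: s) (hl : hasVal out l.1) : ∃ t, q = l :: t := by
  induction q generalizing out with
  | nil => simp at hq
  | cons c t ih =>
    by_cases hc : hasVal t c.1
    · rw [lastOcc_cons_of_hasVal hc] at hq
      obtain ⟨t', rfl⟩ := ih (out := out ++ [c]) (by simpa using hw) hq (by simp [hl])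
      have hlt' : ¬ hasVal t' l.1 :=
        IsMagnet.not_hasVal_right (p := out ++ [c]) (by simpa using hw) (by simp [hl])
      have hcl : c.1 ≠ l.1 := fun h =>
        hw.not_hasVal_right (h ▸ hl) (by simp [h])
      have hct' : hasVal t' c.1 := (hasVal_cons.1 hc).resolve_left hcl.symm
      exact absurd (hw.hasVal_right_of_adjacent hcl hct' hl) hlt'
    · rw [lastOcc_cons_of_not_hasVal hc, List.cons.injEq] at hq
      exact ⟨t, by rw [hq.1]⟩

lemma IsMagnet.head_eq_of_hasVal (hw : IsMagnet (out ++ c :: t))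
    (hw' : IsMagnet (out ++ c' :: t')) (h : lastOcc (c :: t) = lastOcc (c' :: t'))
    (hc : hasVal out c.1) : c = c' := by
  rw [lastOcc_cons_of_not_hasVal (hw.not_hasVal_right hc)] at h
  obtain ⟨_, ht'⟩ := hw'.eq_cons_of_lastOcc_eq_cons h.symm hc
  exact (List.cons.inj ht').1.symm

lemma IsMagnet.head_eq (hw : IsMagnet (out ++ c :: t)) (hw' : IsMagnet (out ++ c' :: t'))
    (hfirst : firstKAux 1 out (c :: t) = firstKAux 1 out (c' :: t'))
    (hlast : lastOcc (c :: t) = lastOcc (c' :: t')) : c = c' := by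
  by_cases hc : hasVal out c.1
  · exact hw.head_eq_of_hasVal hw' hlast hc
  by_cases hc' : hasVal out c'.1
  · exact (hw'.head_eq_of_hasVal hw hlast.symm hc').symm
  simp only [firstKAux_one_cons, hc, hc', if_false, List.cons.injEq] at hfirst
  exact hfirst.1

lemma IsMagnet.hasVal_of_lastOcc_cons_eq (hw : IsMagnet (out ++ c :: t'))
    (h : lastOcc (c :: t) = lastOcc (c :: t')) (hc : hasVal t' c.1) : hasVal t c.1 := by
  by_contra hct
  rw [lastOcc_cons_of_not_hasVal hct, lastOcc_cons_of_hasVal hc] at h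
  obtain ⟨t'', rfl⟩ :=
    IsMagnet.eq_cons_of_lastOcc_eq_cons (out := out ++ [c]) (by simpa using hw) h.symm (by simp)
  exact hw.ne_of_adjacent rfl

theorem IsMagnet.eq_of_firstKAux_eq_of_lastOcc_eq {q q' : PW M n} (hw : IsMagnet (out ++ q))
    (hw' : IsMagnet (out ++ q')) (hfirst : firstKAux 1 out q = firstKAux 1 out q')
    (hlast : lastOcc q = lastOcc q') : q = q' := by
  induction q generalizing out q' with
  | nil => exact (lastOcc_eq_nil.1 hlast.symm).symm
  | cons c t ih =>
    obtain ⟨c', t', rfl⟩ : ∃ c' t', q' = c' :: t' :=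
      List.exists_cons_of_ne_nil (by rintro rfl; simp at hlast)
    obtain rfl := hw.head_eq hw' hfirst hlast
    have hiff : hasVal t c.1 ↔ hasVal t' c.1 :=
      ⟨(hw.hasVal_of_lastOcc_cons_eq hlast.symm ·), (hw'.hasVal_of_lastOcc_cons_eq hlast ·)⟩
    have hlast' : lastOcc t = lastOcc t' := by
      by_cases hc : hasVal t c.1
      · rwa [lastOcc_cons_of_hasVal hc, lastOcc_cons_of_hasVal (hiff.1 hc)] at hlast
      · rw [lastOcc_cons_of_not_hasVal hc, lastOcc_cons_of_not_hasVal (hiff.not.1 hc)] at hlast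
        exact List.cons.inj hlast |>.2
    have hfirst' : firstKAux 1 (out ++ [c]) t = firstKAux 1 (out ++ [c]) t' := by
      simp only [firstKAux_one_cons] at hfirst
      split_ifs at hfirst
      · exact hfirst
      · exact List.cons.inj hfirst |>.2
    rw [ih (by simpa using hw) (by simpa using hw') hfirst' hlast']

end Magnet

theorem exists_isMagnet (p : PW M n) :
    ∃ q, firstK 1 q = firstK 1 p ∧ lastOcc q = lastOcc p ∧ IsMagnet q := by
  by_cases hp : IsMagnet p
  · exact ⟨p, rfl, rfl, hp⟩
  obtain ⟨v, hv⟩ : ∃ v, MagnStep p v := by simpa [IsMagnet] using hp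
  obtain ⟨q, hfirst, hlast, hq⟩ := exists_isMagnet v
  exact ⟨q, hfirst.trans hv.firstK_one_eq, hlast.trans hv.lastOcc_eq, hq⟩
termination_by lastOccPosSum p
decreasing_by exact hv.lastOccPosSum_lt

end Magnets

theorem magnet_unique_in_class_general (M : Type*) (n : ℕ) (p : PW M n) :
    ∃! q : PW M n,
      (firstK 1 q = firstK 1 p ∧ firstKR 1 q = firstKR 1 p) ∧ IsMagnet q := by
  simp only [firstKR_one_eq_lastOcc]
  obtain ⟨q, hfirst, hlast, hq⟩ := exists_isMagnet p
  refine ⟨q, ⟨⟨hfirst, hlast⟩, hq⟩, fun q' ⟨⟨hfirst', hlast'⟩, hq'⟩ => ?_⟩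
  exact IsMagnet.eq_of_firstKAux_eq_of_lastOcc_eq (out := [])
    hq' hq (hfirst'.trans hfirst.symm) (hlast'.trans hlast.symm)

/-- Every equivalence class of the relation `p ≡ p'` iff `firstK 1 p = firstK 1 p'` and
`firstKR 1 p = firstKR 1 p'` contains exactly one magnet. -/
theorem magnet_unique_in_class (M : Type*) [Monoid M] (n : ℕ) (p : PW M n) :
    ∃! q : PW M n,
      (firstK 1 q = firstK 1 p ∧ firstKR 1 q = firstKR 1 p) ∧ IsMagnet q :=
  magnet_unique_in_class_general M n p
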